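/- arXiv:2211.03542 — 3 statements merged into one kernel-verified Lean document; each statement's English description precedes it below -/
import Mathlib

section
/- Behavior of the areal coordinate: (i) if k̃ ≠ 0 (so ζ > 1), then r(ρ) → 0 as ρ → r_s (through ρ > 0, ρ ≠ r_s); (ii) for every k̃ ∈ ℝ, lim_{ρ→0⁺} r(ρ)/ρ^{(ζ+1)/2} = ζ r_s^{(1−ζ)/2}, and in particular r(ρ) → 0 as ρ → 0⁺. -/
/-!
With `x = 1 - r_s/ρ`, part (i) is continuity at `x = 0`: the numerator `|x|^((ζ-1)/2)` vanishes
there once `ζ > 1`, while the denominator tends to `1`. For `0 < ρ < r_s` one has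
`x = -(r_s - ρ)/ρ`, and clearing the powers of `ρ` gives
`r(ρ) = ζ r_s (r_s - ρ)^((ζ-1)/2) / (ρ^ζ + (r_s - ρ)^ζ) · ρ^((ζ+1)/2)`,
whose cofactor of `ρ^((ζ+1)/2)` is continuous at `ρ = 0` with value `ζ r_s^((1-ζ)/2)`.
-/

open Real Filter Topology

/-- `r(ρ) = arealProfile (ζ r_s) ((ζ - 1)/2) ζ (1 - r_s/ρ)`. -/
noncomputable def arealProfile (c q ζ x : ℝ) : ℝ :=
  c * |x| ^ q / |1 - sign x * |x| ^ ζ|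

lemma tendsto_sign_mul_abs_rpow_nhds_zero {ζ : ℝ} (hζ : 0 < ζ) :
    Tendsto (fun x : ℝ => sign x * |x| ^ ζ) (𝓝 0) (𝓝 0) := by
  have habs : Tendsto (fun x : ℝ => |x| ^ ζ) (𝓝 0) (𝓝 0) :=
    (continuous_abs.tendsto' 0 0 abs_zero).rpow_const_nhds_zero hζ
  refine squeeze_zero_norm (fun x => ?_) habs
  have hx := rpow_nonneg (abs_nonneg x) ζ
  rcases sign_apply_eq x with h | h | h <;> simp [h, abs_of_nonneg hx, hx]

lemma tendsto_arealProfile_nhds_zero {q ζ : ℝ} (c : ℝ) (hq : 0 < q) (hζ : 0 < ζ) :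
    Tendsto (arealProfile c q ζ) (𝓝 0) (𝓝 0) := by
  have hnum : Tendsto (fun x : ℝ => c * |x| ^ q) (𝓝 0) (𝓝 0) := by
    simpa using ((continuous_abs.tendsto' 0 0 abs_zero).rpow_const_nhds_zero hq).const_mul c
  have hden : Tendsto (fun x : ℝ => |1 - sign x * |x| ^ ζ|) (𝓝 0) (𝓝 1) := by
    simpa using ((tendsto_sign_mul_abs_rpow_nhds_zero hζ).const_sub 1).abs
  have h := hnum.div hden one_ne_zero
  rwa [zero_div] at h

lemma tendsto_one_sub_div_nhds_self {s : ℝ} (hs : s ≠ 0) :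
    Tendsto (fun ρ : ℝ => 1 - s / ρ) (𝓝 s) (𝓝 0) := by
  have h : ContinuousAt (fun ρ : ℝ => 1 - s / ρ) s := by fun_prop (disch := assumption)
  simpa [div_self hs] using h.tendsto

lemma arealProfile_one_sub_div_of_lt {s ρ : ℝ} (c q ζ : ℝ) (hρ : 0 < ρ) (hρs : ρ < s) :
    arealProfile c q ζ (1 - s / ρ) = c * (s - ρ) ^ q / (ρ ^ ζ + (s - ρ) ^ ζ) * ρ ^ (ζ - q) := by
  have hx : 1 - s / ρ = -((s - ρ) / ρ) := by field_simp; ring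
  have hsρ : 0 < s - ρ := sub_pos.2 hρs
  have hu : 0 < (s - ρ) / ρ := div_pos hsρ hρ
  rw [arealProfile, hx, sign_neg, sign_of_pos hu, abs_neg, abs_of_pos hu, div_rpow hsρ.le hρ.le,
    div_rpow hsρ.le hρ.le, rpow_sub hρ]
  have := rpow_pos_of_pos hρ q
  have := rpow_pos_of_pos hρ ζ
  have := rpow_pos_of_pos hsρ ζ
  rw [show 1 - -1 * ((s - ρ) ^ ζ / ρ ^ ζ) = (ρ ^ ζ + (s - ρ) ^ ζ) / ρ ^ ζ by field_simp; ring,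
    abs_of_pos (by positivity)]
  field_simp

lemma tendsto_sub_rpow_div_rpow_add_sub_rpow {s q ζ : ℝ} (hs : 0 < s) (hζ : 0 < ζ) :
    Tendsto (fun ρ : ℝ => (s - ρ) ^ q / (ρ ^ ζ + (s - ρ) ^ ζ)) (𝓝 0) (𝓝 (s ^ (q - ζ))) := by
  have hsub : Tendsto (fun ρ : ℝ => s - ρ) (𝓝 0) (𝓝 s) := by
    simpa using (continuous_sub_left s).tendsto 0
  have hden : Tendsto (fun ρ : ℝ => ρ ^ ζ + (s - ρ) ^ ζ) (𝓝 0) (𝓝 (s ^ ζ)) := by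
    simpa using (tendsto_id.rpow_const_nhds_zero hζ).add (hsub.rpow_const (.inl hs.ne'))
  rw [rpow_sub hs]
  exact (hsub.rpow_const (.inl hs.ne')).div hden (rpow_pos_of_pos hs ζ).ne'

lemma tendsto_arealProfile_one_sub_div_div_rpow_nhdsGT_zero {s q ζ : ℝ} (c : ℝ) (hs : 0 < s)
    (hζ : 0 < ζ) :
    Tendsto (fun ρ : ℝ => arealProfile c q ζ (1 - s / ρ) / ρ ^ (ζ - q)) (𝓝[>] 0)
      (𝓝 (c * s ^ (q - ζ))) := by
  refine (((tendsto_sub_rpow_div_rpow_add_sub_rpow hs hζ).const_mul c).mono_left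
    nhdsWithin_le_nhds).congr' ?_
  filter_upwards [Ioo_mem_nhdsGT hs] with ρ ⟨hρ, hρs⟩
  rw [arealProfile_one_sub_div_of_lt c q ζ hρ hρs,
    mul_div_cancel_right₀ _ (rpow_pos_of_pos hρ _).ne', mul_div_assoc]

/-- Behavior of the areal coordinate: (i) if `k̃ ≠ 0` then `r(ρ) → 0` as `ρ → r_s`
(through `ρ > 0`, `ρ ≠ r_s`); (ii) for every `k̃`,
`lim_{ρ→0⁺} r(ρ)/ρ^{(ζ+1)/2} = ζ r_s^{(1−ζ)/2}`, and in particular `r(ρ) → 0` as `ρ → 0⁺`. -/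
theorem areal_coordinate_behavior
    (rs kt : ℝ) (hrs : 0 < rs)
    (ζ : ℝ) (hζ : ζ = Real.sqrt (1 + 3 * kt ^ 2))
    (r : ℝ → ℝ)
    (hr : ∀ ρ : ℝ, 0 < ρ → ρ ≠ rs → r ρ =
      ζ * rs * |1 - rs / ρ| ^ ((ζ - 1) / 2) /
        |1 - Real.sign (1 - rs / ρ) * |1 - rs / ρ| ^ ζ|) :
    (kt ≠ 0 → Tendsto r (𝓝[Set.Ioi 0 \ {rs}] rs) (𝓝 0)) ∧
      Tendsto (fun ρ : ℝ => r ρ / ρ ^ ((ζ + 1) / 2)) (𝓝[>] 0)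
        (𝓝 (ζ * rs ^ ((1 - ζ) / 2))) ∧
      Tendsto r (𝓝[>] 0) (𝓝 0) := by
  have hζ0 : 0 < ζ := by
    rw [hζ]
    positivity
  have hratio : Tendsto (fun ρ : ℝ => r ρ / ρ ^ ((ζ + 1) / 2)) (𝓝[>] 0)
      (𝓝 (ζ * rs ^ ((1 - ζ) / 2))) := by
    have h := tendsto_arealProfile_one_sub_div_div_rpow_nhdsGT_zero (q := (ζ - 1) / 2) (ζ * rs)
      hrs hζ0
    rw [mul_assoc, mul_comm rs, ← rpow_add_one hrs.ne',
      show (ζ - 1) / 2 - ζ + 1 = (1 - ζ) / 2 by ring, show ζ - (ζ - 1) / 2 = (ζ + 1) / 2 by ring] at h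
    refine h.congr' ?_
    filter_upwards [Ioo_mem_nhdsGT hrs] with ρ ⟨hρ, hρrs⟩
    rw [hr ρ hρ hρrs.ne, arealProfile]
  refine ⟨fun hkt => ?_, hratio, ?_⟩
  · have hζ1 : 1 < ζ := by
      rw [hζ]
      exact Real.lt_sqrt_of_sq_lt (by nlinarith [sq_pos_of_ne_zero hkt])
    refine ((tendsto_arealProfile_nhds_zero (q := (ζ - 1) / 2) (ζ * rs) (by linarith) hζ0).comp
      ((tendsto_one_sub_div_nhds_self hrs.ne').mono_left nhdsWithin_le_nhds)).congr' ?_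
    filter_upwards [self_mem_nhdsWithin] with ρ ⟨hρ, hρrs⟩
    exact (hr ρ hρ hρrs).symm
  · have hpow : Tendsto (fun ρ : ℝ => ρ ^ ((ζ + 1) / 2)) (𝓝[>] 0) (𝓝 0) :=
      tendsto_nhdsWithin_of_tendsto_nhds (tendsto_id.rpow_const_nhds_zero (by linarith))
    refine (mul_zero (ζ * rs ^ ((1 - ζ) / 2)) ▸ hratio.mul hpow).congr' ?_
    filter_upwards [self_mem_nhdsWithin] with ρ hρ
    exact div_mul_cancel₀ _ (rpow_pos_of_pos hρ _).ne'
end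

section
/- Large-distance expansion of the areal coordinate: lim_{ρ→+∞} ρ·(r(ρ) − ρ) = −k̃² r_s² / 8; in particular r(ρ) − ρ → 0 as ρ → +∞, so the metric is asymptotically flat. -/
/-!
Put `u = r_s / ρ`, so that `u → 0⁺` and `x = 1 - u ∈ (0, 1)`. Then
`ρ (r - ρ) = r_s² · [(ζ u x^((ζ-1)/2) - (1 - x^ζ)) / u³] / [(1 - x^ζ) / u]`.
By the binomial series, `(1 - u)^a = 1 - a u + a(a-1)/2 u² - a(a-1)(a-2)/6 u³ + O(u⁴)`;
since the exponent is `(ζ - 1)/2` the `u²` terms of the numerator cancel and it equals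
`-ζ(ζ² - 1)/24 · u³ + O(u⁴)`, while the denominator tends to `ζ`. With `ζ² - 1 = 3 k̃²` the
limit is `-k̃² r_s² / 8`, and dividing by `ρ` gives `r - ρ → 0`.
-/

open Real Filter Topology Asymptotics Finset

lemma Ring.choose_two_eq {K : Type*} [Field K] [CharZero K] (a : K) :
    Ring.choose a 2 = a * (a - 1) / 2 := by
  rw [Ring.choose_eq_smul]
  simp only [Nat.factorial_two, Nat.cast_ofNat, descPochhammer_succ_right, descPochhammer_zero,
    CharP.cast_eq_zero, sub_zero, one_mul, Nat.cast_one, Polynomial.smeval_mul,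
    Polynomial.smeval_X, pow_one, Polynomial.smeval_sub, Polynomial.smeval_one, pow_zero,
    one_smul, smul_eq_mul]
  ring

lemma Ring.choose_three_eq {K : Type*} [Field K] [CharZero K] (a : K) :
    Ring.choose a 3 = a * (a - 1) * (a - 2) / 6 := by
  rw [Ring.choose_eq_smul]
  simp only [Nat.factorial, Nat.succ_eq_add_one, Nat.reduceAdd, zero_add, mul_one,
    Nat.reduceMul, descPochhammer_succ_right, descPochhammer_zero, CharP.cast_eq_zero, sub_zero,
    one_mul, Nat.cast_one, Polynomial.smeval_mul, Polynomial.smeval_X, pow_one,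
    Polynomial.smeval_sub, Polynomial.smeval_one, pow_zero, one_smul, Polynomial.smeval_natCast,
    nsmul_eq_mul, smul_eq_mul]
  ring

lemma one_sub_rpow_sub_sum_isBigO (a : ℝ) (n : ℕ) :
    (fun u : ℝ => (1 - u) ^ a - ∑ k ∈ range n, Ring.choose a k * (-u) ^ k) =O[𝓝 0]
      fun u => u ^ n := by
  have h := ((one_add_rpow_hasFPowerSeriesAt_zero (a := a)).isBigO_sub_partialSum_pow
    n).comp_tendsto (by simpa using (continuous_neg (G := ℝ)).tendsto 0)
  simp only [Function.comp_def, zero_add, norm_neg] at h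
  simp only [norm_eq_abs, ← abs_pow, isBigO_abs_right] at h
  simpa [FormalMultilinearSeries.partialSum, binomialSeries,
    FormalMultilinearSeries.ofScalars_apply_eq, mul_comm, ← sub_eq_add_neg] using h

lemma tendsto_div_pow_nhdsNE_of_isBigO {f : ℝ → ℝ} {c : ℝ} {n : ℕ}
    (h : (fun u => f u - c * u ^ n) =O[𝓝 0] fun u => u ^ (n + 1)) :
    Tendsto (fun u => f u / u ^ n) (𝓝[≠] 0) (𝓝 c) := by
  have h₀ : Tendsto (fun u => (f u - c * u ^ n) / u ^ n) (𝓝[≠] 0) (𝓝 0) :=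
    ((h.trans_isLittleO (isLittleO_pow_pow (Nat.lt_succ_self n))).mono
      nhdsWithin_le_nhds).tendsto_div_nhds_zero
  refine tendsto_sub_nhds_zero_iff.mp (h₀.congr' ?_)
  filter_upwards [self_mem_nhdsWithin] with u hu
  field_simp [pow_ne_zero n hu]

lemma tendsto_one_sub_one_sub_rpow_div (a : ℝ) :
    Tendsto (fun u : ℝ => (1 - (1 - u) ^ a) / u) (𝓝[≠] 0) (𝓝 a) := by
  have h := (one_sub_rpow_sub_sum_isBigO a 2).neg_left
  simp only [sum_range_succ, sum_range_zero, Ring.choose_zero_right, Ring.choose_one_right] at h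
  simpa using tendsto_div_pow_nhdsNE_of_isBigO (n := 1) (f := fun u => 1 - (1 - u) ^ a) (c := a)
    (h.congr_left fun u => by ring)

lemma tendsto_mul_one_sub_rpow_sub_div_cube (ζ : ℝ) :
    Tendsto (fun u : ℝ => (ζ * u * (1 - u) ^ ((ζ - 1) / 2) - (1 - (1 - u) ^ ζ)) / u ^ 3)
      (𝓝[≠] 0) (𝓝 (-(ζ * (ζ ^ 2 - 1)) / 24)) := by
  set p := (ζ - 1) / 2
  refine tendsto_div_pow_nhdsNE_of_isBigO ?_
  have hp : (fun u : ℝ => u * ((1 - u) ^ p - ∑ k ∈ range 3, Ring.choose p k * (-u) ^ k))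
      =O[𝓝 0] fun u => u ^ 4 :=
    ((isBigO_refl _ _).mul (one_sub_rpow_sub_sum_isBigO p 3)).congr_right fun u => by ring
  have hζ := one_sub_rpow_sub_sum_isBigO ζ 4
  refine ((hp.const_mul_left ζ).add hζ).congr' ?_ ?_
  · filter_upwards with u
    simp only [sum_range_succ, sum_range_zero, Ring.choose_zero_right, Ring.choose_one_right,
      Ring.choose_two_eq, Ring.choose_three_eq, p]
    ring
  · filter_upwards with u; ring

lemma mul_areal_sub_self_eq {ζ rs ρ : ℝ} (hζ : 0 < ζ) (hrs : 0 < rs) (hρ : rs < ρ) :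
    ρ * (ζ * rs * |1 - rs / ρ| ^ ((ζ - 1) / 2) /
        |1 - Real.sign (1 - rs / ρ) * |1 - rs / ρ| ^ ζ| - ρ) =
      rs ^ 2 * ((ζ * (rs / ρ) * (1 - rs / ρ) ^ ((ζ - 1) / 2) - (1 - (1 - rs / ρ) ^ ζ)) /
        (rs / ρ) ^ 3 / ((1 - (1 - rs / ρ) ^ ζ) / (rs / ρ))) := by
  have hρ0 : 0 < ρ := hrs.trans hρ
  have hx : 0 < 1 - rs / ρ := sub_pos.mpr ((div_lt_one hρ0).mpr hρ)
  have hxζ : (1 - rs / ρ) ^ ζ < 1 :=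
    rpow_lt_one hx.le (sub_lt_self _ (div_pos hrs hρ0)) hζ
  have hD : 1 - (1 - rs / ρ) ^ ζ ≠ 0 := (sub_pos.mpr hxζ).ne'
  rw [Real.sign_of_pos hx, one_mul, abs_of_pos hx, abs_of_pos (sub_pos.mpr hxζ)]
  generalize (1 - rs / ρ) ^ ((ζ - 1) / 2) = A at *
  generalize (1 - rs / ρ) ^ ζ = B at *
  field_simp

/-- Large-distance expansion of the areal coordinate:
`lim_{ρ→+∞} ρ·(r(ρ) − ρ) = −k̃² r_s²/8`; in particular `r(ρ) − ρ → 0` as `ρ → +∞`,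
so the metric is asymptotically flat. -/
theorem areal_coordinate_asymptotic_flatness
    (rs kt : ℝ) (hrs : 0 < rs)
    (ζ : ℝ) (hζ : ζ = Real.sqrt (1 + 3 * kt ^ 2))
    (r : ℝ → ℝ)
    (hr : ∀ ρ : ℝ, 0 < ρ → ρ ≠ rs → r ρ =
      ζ * rs * |1 - rs / ρ| ^ ((ζ - 1) / 2) /
        |1 - Real.sign (1 - rs / ρ) * |1 - rs / ρ| ^ ζ|) :
    Tendsto (fun ρ : ℝ => ρ * (r ρ - ρ)) atTop (𝓝 (-(kt ^ 2 * rs ^ 2) / 8)) ∧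
      Tendsto (fun ρ : ℝ => r ρ - ρ) atTop (𝓝 0) := by
  have hζ0 : 0 < ζ := hζ ▸ Real.sqrt_pos.mpr (by positivity)
  have hζsq : ζ ^ 2 - 1 = 3 * kt ^ 2 := by rw [hζ, Real.sq_sqrt (by positivity)]; ring
  have hu : Tendsto (fun ρ => rs / ρ) atTop (𝓝[≠] 0) :=
    tendsto_nhdsWithin_iff.mpr ⟨tendsto_const_nhds.div_atTop tendsto_id,
      by filter_upwards [eventually_gt_atTop 0] with ρ hρ using (div_pos hrs hρ).ne'⟩
  have hlim := (((tendsto_mul_one_sub_rpow_sub_div_cube ζ).div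
    (tendsto_one_sub_one_sub_rpow_div ζ) hζ0.ne').const_mul (rs ^ 2)).comp hu
  have hval : rs ^ 2 * (-(ζ * (ζ ^ 2 - 1)) / 24 / ζ) = -(kt ^ 2 * rs ^ 2) / 8 := by
    rw [hζsq]; field_simp; ring
  have hmain : Tendsto (fun ρ => ρ * (r ρ - ρ)) atTop (𝓝 (-(kt ^ 2 * rs ^ 2) / 8)) := by
    rw [← hval]
    refine hlim.congr' ?_
    filter_upwards [eventually_gt_atTop rs] with ρ hρ
    rw [hr ρ (hrs.trans hρ) hρ.ne', mul_areal_sub_self_eq hζ0 hrs hρ]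
    rfl
  have hdiff := hmain.mul tendsto_inv_atTop_zero
  rw [mul_zero] at hdiff
  refine ⟨hmain, hdiff.congr' ?_⟩
  filter_upwards [eventually_gt_atTop 0] with ρ hρ
  field_simp
end

section
/- Curvature singularity on the interior-exterior boundary: as ρ → r_s (through ρ > 0, ρ ≠ r_s), lim |1 − r_s/ρ|^{2(2ζ + k̃ − 1)} · K(ρ) = (2/(ζ⁸ r_s⁴)) · [ ζ(4k̃³ − 5k̃² − 3) + (9k̃⁴ − 2k̃³ + 10k̃² + 3) ]; moreover this constant vanishes exactly when k̃ = 0 or k̃ = −1, and for every k̃ ∉ {0, −1} one has K(ρ) → +∞ as ρ → r_s. -/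
open Real Filter Topology

/-!
Write `x = 1 - r_s/ρ`, which tends to `0` through nonzero values. The factor
`|x|^{2(2ζ + k̃ - 1)}` cancels the power of `|x|` in `K` exactly, leaving a polynomial in
`sgn(x)|x|^ζ` and `|x|^{2ζ}`, both of which tend to `0`; its limit is `ζA + D` with
`A = 4k̃³ - 5k̃² - 3` and `D = 9k̃⁴ - 2k̃³ + 10k̃² + 3`. Since `D > 0` and
`D² - ζ²A² = 3k̃²(k̃ + 1)²(11k̃⁴ + 6k̃³ + 8k̃² + 2k̃ + 1)`, this limit is positive unless
`k̃ ∈ {0, -1}`. Finally `2ζ + k̃ > 1`, so `|x|^{-2(2ζ + k̃ - 1)}` blows up and so does `K`.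
-/

theorem Filter.Tendsto.atTop_of_mul_of_nhdsGT_zero {𝕜 α : Type*} [Field 𝕜] [LinearOrder 𝕜]
    [IsStrictOrderedRing 𝕜] [TopologicalSpace 𝕜] [OrderTopology 𝕜] {l : Filter α}
    {f g : α → 𝕜} {L : 𝕜} (hf : Tendsto f l (𝓝[>] 0))
    (hfg : Tendsto (fun a => f a * g a) l (𝓝 L)) (hL : 0 < L) : Tendsto g l atTop := by
  refine ((tendsto_inv_nhdsGT_zero.comp hf).atTop_mul_pos hL hfg).congr' ?_
  filter_upwards [hf.eventually self_mem_nhdsWithin] with a ha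
  simp [inv_mul_cancel_left₀ (ne_of_gt ha)]

theorem tendsto_one_sub_div_nhdsNE {r : ℝ} (hr : r ≠ 0) :
    Tendsto (fun ρ : ℝ => 1 - r / ρ) (𝓝[≠] r) (𝓝[≠] 0) := by
  refine tendsto_nhdsWithin_iff.2 ⟨?_, ?_⟩
  · have h : ContinuousAt (fun ρ : ℝ => 1 - r / ρ) r := by fun_prop (disch := exact hr)
    simpa [div_self hr] using h.tendsto.mono_left nhdsWithin_le_nhds
  · filter_upwards [self_mem_nhdsWithin] with ρ hρ h
    rcases eq_or_ne ρ 0 with rfl | hρ0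
    · simp at h -- junk value: `r / 0 = 0`
    · exact hρ ((div_eq_one_iff_eq hρ0).1 (sub_eq_zero.1 h).symm).symm

theorem tendsto_abs_rpow_nhdsNE_zero {e : ℝ} (he : 0 < e) :
    Tendsto (fun x : ℝ => |x| ^ e) (𝓝[≠] 0) (𝓝[>] 0) := by
  refine tendsto_nhdsWithin_iff.2 ⟨?_, ?_⟩
  · have h := (Real.continuousAt_rpow_const 0 e (Or.inr he.le)).tendsto.comp
      (continuous_abs.tendsto' 0 0 abs_zero)
    simpa [Real.zero_rpow he.ne', Function.comp_def] using h.mono_left nhdsWithin_le_nhds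
  · filter_upwards [self_mem_nhdsWithin] with x hx
    exact Real.rpow_pos_of_pos (abs_pos.2 hx) e

theorem tendsto_sign_mul_abs_rpow_nhdsNE_zero {ζ : ℝ} (hζ : 0 < ζ) :
    Tendsto (fun x : ℝ => Real.sign x * |x| ^ ζ) (𝓝[≠] 0) (𝓝 0) := by
  refine squeeze_zero_norm (fun x => ?_)
    ((tendsto_abs_rpow_nhdsNE_zero hζ).mono_right nhdsWithin_le_nhds)
  rw [norm_mul, Real.norm_eq_abs, Real.norm_of_nonneg (Real.rpow_nonneg (abs_nonneg x) ζ)]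
  refine mul_le_of_le_one_left (Real.rpow_nonneg (abs_nonneg x) ζ) ?_
  rcases Real.sign_apply_eq x with h | h | h <;> simp [h]

theorem one_lt_two_mul_add_of_sq_eq {k ζ : ℝ} (hζ : 0 ≤ ζ) (hζsq : ζ ^ 2 = 1 + 3 * k ^ 2) :
    1 < 2 * ζ + k := by
  nlinarith [sq_nonneg (11 * k + 1)]

theorem boundary_coeff_pos {k ζ : ℝ} (hζsq : ζ ^ 2 = 1 + 3 * k ^ 2)
    (h0 : k ≠ 0) (h1 : k ≠ -1) :
    0 < ζ * (4 * k ^ 3 - 5 * k ^ 2 - 3) + (9 * k ^ 4 - 2 * k ^ 3 + 10 * k ^ 2 + 3) := by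
  have hD : 0 < 9 * k ^ 4 - 2 * k ^ 3 + 10 * k ^ 2 + 3 := by
    nlinarith [sq_nonneg (k ^ 2 - k), sq_nonneg (k ^ 2), sq_nonneg k]
  have hk1 : k + 1 ≠ 0 := fun h => h1 (by linarith)
  have hQ : 0 < 11 * k ^ 4 + 6 * k ^ 3 + 8 * k ^ 2 + 2 * k + 1 := by
    nlinarith [sq_nonneg (3 * k ^ 2 + k), sq_nonneg (7 * k + 1), sq_nonneg (k ^ 2)]
  have hsq : (ζ * (4 * k ^ 3 - 5 * k ^ 2 - 3)) ^ 2 <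
      (9 * k ^ 4 - 2 * k ^ 3 + 10 * k ^ 2 + 3) ^ 2 := by
    have hdiff : (9 * k ^ 4 - 2 * k ^ 3 + 10 * k ^ 2 + 3) ^ 2 -
        (ζ * (4 * k ^ 3 - 5 * k ^ 2 - 3)) ^ 2
        = 3 * k ^ 2 * (k + 1) ^ 2 * (11 * k ^ 4 + 6 * k ^ 3 + 8 * k ^ 2 + 2 * k + 1) := by
      rw [mul_pow, hζsq]; ring
    have : 0 < 3 * k ^ 2 * (k + 1) ^ 2 * (11 * k ^ 4 + 6 * k ^ 3 + 8 * k ^ 2 + 2 * k + 1) := by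
      positivity
    linarith
  linarith [(abs_lt_of_sq_lt_sq' hsq hD.le).1]

theorem boundary_coeff_eq_zero_iff {k ζ : ℝ} (hζ : 0 ≤ ζ) (hζsq : ζ ^ 2 = 1 + 3 * k ^ 2) :
    ζ * (4 * k ^ 3 - 5 * k ^ 2 - 3) + (9 * k ^ 4 - 2 * k ^ 3 + 10 * k ^ 2 + 3) = 0 ↔
      k = 0 ∨ k = -1 := by
  refine ⟨fun h => ?_, ?_⟩
  · by_contra! hk
    exact (boundary_coeff_pos hζsq hk.1 hk.2).ne' h
  · rintro (rfl | rfl) <;> nlinarith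

noncomputable def kretschmannProfile (k ζ x : ℝ) : ℝ :=
  (1 - Real.sign x * |x| ^ ζ) ^ 6 *
    (4 * k ^ 2 * (k + 1) * (Real.sign x * |x| ^ ζ) +
      ζ * (4 * k ^ 3 - 5 * k ^ 2 - 3) * (1 - |x| ^ (2 * ζ)) +
      (9 * k ^ 4 - 2 * k ^ 3 + 10 * k ^ 2 + 3) * (1 + |x| ^ (2 * ζ)))

theorem tendsto_kretschmannProfile {k ζ : ℝ} (hζ : 0 < ζ) :
    Tendsto (kretschmannProfile k ζ) (𝓝[≠] 0)
      (𝓝 (ζ * (4 * k ^ 3 - 5 * k ^ 2 - 3) + (9 * k ^ 4 - 2 * k ^ 3 + 10 * k ^ 2 + 3))) := by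
  have hs := tendsto_sign_mul_abs_rpow_nhdsNE_zero hζ
  have hv := (tendsto_abs_rpow_nhdsNE_zero (by positivity : 0 < 2 * ζ)).mono_right
    nhdsWithin_le_nhds
  have h1 : Tendsto (fun _ : ℝ => (1 : ℝ)) (𝓝[≠] 0) (𝓝 1) := tendsto_const_nhds
  have h := ((h1.sub hs).pow 6).mul
    (((hs.const_mul (4 * k ^ 2 * (k + 1))).add
      ((h1.sub hv).const_mul (ζ * (4 * k ^ 3 - 5 * k ^ 2 - 3)))).add
      ((h1.add hv).const_mul (9 * k ^ 4 - 2 * k ^ 3 + 10 * k ^ 2 + 3)))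
  unfold kretschmannProfile
  simpa only [sub_zero, add_zero, mul_zero, zero_add, one_pow, one_mul, mul_one] using h

theorem abs_rpow_mul_kretschmann_eq {k ζ x : ℝ} (hx : x ≠ 0) (C : ℝ) :
    |x| ^ (2 * (2 * ζ + k - 1)) *
      (C * (1 - Real.sign x * |x| ^ ζ) ^ 6 * |x| ^ (2 - 4 * ζ - 2 * k) *
        (4 * k ^ 2 * (k + 1) * Real.sign x * |x| ^ ζ +
          ζ * (4 * k ^ 3 - 5 * k ^ 2 - 3) * (1 - |x| ^ (2 * ζ)) +
          (9 * k ^ 4 - 2 * k ^ 3 + 10 * k ^ 2 + 3) * (1 + |x| ^ (2 * ζ)))) =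
      C * kretschmannProfile k ζ x := by
  have hcancel : |x| ^ (2 * (2 * ζ + k - 1)) * |x| ^ (2 - 4 * ζ - 2 * k) = 1 := by
    rw [← Real.rpow_add (abs_pos.2 hx)]
    ring_nf
    exact Real.rpow_zero _
  unfold kretschmannProfile
  linear_combination (C * (1 - Real.sign x * |x| ^ ζ) ^ 6 *
    (4 * k ^ 2 * (k + 1) * Real.sign x * |x| ^ ζ +
      ζ * (4 * k ^ 3 - 5 * k ^ 2 - 3) * (1 - |x| ^ (2 * ζ)) +
      (9 * k ^ 4 - 2 * k ^ 3 + 10 * k ^ 2 + 3) * (1 + |x| ^ (2 * ζ)))) * hcancel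

/-- Curvature singularity on the interior-exterior boundary: as `ρ → r_s` (through
`ρ > 0`, `ρ ≠ r_s`), `|1 − r_s/ρ|^{2(2ζ + k̃ − 1)}·K(ρ)` tends to
`(2/(ζ⁸ r_s⁴))·[ζ(4k̃³ − 5k̃² − 3) + (9k̃⁴ − 2k̃³ + 10k̃² + 3)]`; this constant vanishes
exactly when `k̃ = 0` or `k̃ = −1`, and for `k̃ ∉ {0, −1}` one has `K(ρ) → +∞`. -/
theorem kretschmann_boundary_singularity
    (rs kt : ℝ) (hrs : 0 < rs)
    (ζ : ℝ) (hζ : ζ = Real.sqrt (1 + 3 * kt ^ 2))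
    (K : ℝ → ℝ)
    (hK : ∀ ρ : ℝ, 0 < ρ → ρ ≠ rs → K ρ =
      (2 / (ζ ^ 8 * rs ^ 4)) *
        (1 - Real.sign (1 - rs / ρ) * |1 - rs / ρ| ^ ζ) ^ 6 *
        |1 - rs / ρ| ^ (2 - 4 * ζ - 2 * kt) *
        (4 * kt ^ 2 * (kt + 1) * Real.sign (1 - rs / ρ) * |1 - rs / ρ| ^ ζ +
          ζ * (4 * kt ^ 3 - 5 * kt ^ 2 - 3) * (1 - |1 - rs / ρ| ^ (2 * ζ)) +
          (9 * kt ^ 4 - 2 * kt ^ 3 + 10 * kt ^ 2 + 3) * (1 + |1 - rs / ρ| ^ (2 * ζ)))) :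
    Tendsto (fun ρ : ℝ => |1 - rs / ρ| ^ (2 * (2 * ζ + kt - 1)) * K ρ)
        (𝓝[Set.Ioi 0 \ {rs}] rs)
        (𝓝 ((2 / (ζ ^ 8 * rs ^ 4)) *
          (ζ * (4 * kt ^ 3 - 5 * kt ^ 2 - 3) +
            (9 * kt ^ 4 - 2 * kt ^ 3 + 10 * kt ^ 2 + 3)))) ∧
      ((2 / (ζ ^ 8 * rs ^ 4)) *
          (ζ * (4 * kt ^ 3 - 5 * kt ^ 2 - 3) +
            (9 * kt ^ 4 - 2 * kt ^ 3 + 10 * kt ^ 2 + 3)) = 0 ↔ kt = 0 ∨ kt = -1) ∧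
      (kt ≠ 0 → kt ≠ -1 → Tendsto K (𝓝[Set.Ioi 0 \ {rs}] rs) atTop) := by
  have hζpos : 0 < ζ := hζ ▸ Real.sqrt_pos.2 (by positivity)
  have hζsq : ζ ^ 2 = 1 + 3 * kt ^ 2 := by rw [hζ, Real.sq_sqrt (by positivity)]
  have hC : 0 < 2 / (ζ ^ 8 * rs ^ 4) := by positivity
  have hx : Tendsto (fun ρ : ℝ => 1 - rs / ρ) (𝓝[Set.Ioi 0 \ {rs}] rs) (𝓝[≠] 0) :=
    (tendsto_one_sub_div_nhdsNE hrs.ne').mono_left (nhdsWithin_mono _ (Set.sdiff_subset_compl _ _))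
  have hscaled : ∀ᶠ ρ in 𝓝[Set.Ioi 0 \ {rs}] rs,
      2 / (ζ ^ 8 * rs ^ 4) * kretschmannProfile kt ζ (1 - rs / ρ) =
        |1 - rs / ρ| ^ (2 * (2 * ζ + kt - 1)) * K ρ := by
    filter_upwards [self_mem_nhdsWithin, hx.eventually self_mem_nhdsWithin]
      with ρ ⟨hρ, hρrs⟩ hx0
    rw [hK ρ hρ hρrs, abs_rpow_mul_kretschmann_eq hx0]
  have hlim := (((tendsto_kretschmannProfile hζpos).comp hx).const_mul _).congr' hscaled
  refine ⟨hlim, ?_, fun h0 h1 => ?_⟩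
  · rw [mul_eq_zero_iff_left hC.ne']
    exact boundary_coeff_eq_zero_iff hζpos.le hζsq
  · have hexp : 0 < 2 * (2 * ζ + kt - 1) := by
      linarith [one_lt_two_mul_add_of_sq_eq hζpos.le hζsq]
    exact ((tendsto_abs_rpow_nhdsNE_zero hexp).comp hx).atTop_of_mul_of_nhdsGT_zero hlim
      (mul_pos hC (boundary_coeff_pos hζsq h0 h1))
end
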